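/- Let φ: A → B be an étale homomorphism of commutative Noetherian rings, and let I ⊆ A be an ideal such that every associated prime of the A-module A/I is a minimal prime over I. Assume moreover that every minimal prime over I is the contraction φ^{−1}(q) of some prime q of B containing IB (i.e. every generic point of V(I) lies in the image of Spec(B/IB) → Spec A). Then I equals the kernel of the composite ring homomorphism A → B → B/IB; equivalently, the induced map A/I → B/IB is injective. -/

import Mathlib

/-!
Let `K` be the kernel of `M → B ⊗[A] M`. Tensoring the inclusion `K → M` with the flat module `B`
gives an injective map which is zero, so `B ⊗[A] K = 0`. If `K ≠ 0`, it has an associated prime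
`P`, which is also associated to `M`, and `A ⧸ P` embeds in `K`; hence `B ⧸ PB ≅ B ⊗[A] (A ⧸ P)`
vanishes too, i.e. `PB = B`. This is impossible when `P` is the contraction of a prime of `B`.
For `M = A ⧸ I`, where `B ⊗[A] M ≅ B ⧸ IB`, injectivity says exactly that `I` is the kernel of
`A → B ⧸ IB`.
-/

section

open TensorProduct

variable {A B : Type*} [CommRing A] [CommRing B] [Algebra A B]

lemma Module.Flat.subsingleton_tensorProduct_ker_mk [Module.Flat A B]
    (M : Type*) [AddCommGroup M] [Module A M] :
    Subsingleton (B ⊗[A] LinearMap.ker (TensorProduct.mk A B M 1)) := by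
  set K := LinearMap.ker (TensorProduct.mk A B M 1)
  have hinj : Function.Injective (K.subtype.lTensor B) :=
    Module.Flat.lTensor_preserves_injective_linearMap _ K.injective_subtype
  have hzero : K.subtype.lTensor B = 0 := by
    ext b k
    have hk : (1 : B) ⊗ₜ[A] (k : M) = 0 := k.2
    simpa [smul_tmul'] using congrArg (b • ·) hk
  exact ⟨fun x y ↦ hinj (by rw [hzero, LinearMap.zero_apply, LinearMap.zero_apply])⟩

lemma nontrivial_tensorProduct_quotient_comap {q : Ideal B} (hq : q ≠ ⊤) :
    Nontrivial (B ⊗[A] (A ⧸ q.comap (algebraMap A B))) :=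
  have : Nontrivial (B ⧸ (q.comap (algebraMap A B)).map (algebraMap A B)) :=
    Ideal.Quotient.nontrivial_iff.mpr (ne_top_of_le_ne_top hq Ideal.map_comap_le)
  (Algebra.TensorProduct.quotIdealMapEquivTensorQuot B
    (q.comap (algebraMap A B))).toEquiv.symm.nontrivial

theorem Module.Flat.tensorProduct_mk_injective_of_associatedPrimes [Module.Flat A B]
    [IsNoetherianRing A] (M : Type*) [AddCommGroup M] [Module A M]
    (h : ∀ p ∈ associatedPrimes A M, ∃ q : Ideal B, q.IsPrime ∧ q.comap (algebraMap A B) = p) :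
    Function.Injective (TensorProduct.mk A B M 1) := by
  rw [← LinearMap.ker_eq_bot]
  by_contra hK
  have : Nontrivial (LinearMap.ker (TensorProduct.mk A B M 1)) :=
    Submodule.nontrivial_iff_ne_bot.mpr hK
  obtain ⟨P, hPK⟩ := associatedPrimes.nonempty A (LinearMap.ker (TensorProduct.mk A B M 1))
  obtain ⟨q, hq, rfl⟩ := h P (hPK.map_of_injective _ (Submodule.injective_subtype _))
  obtain ⟨-, f, hf⟩ := (isAssociatedPrime_iff_exists_injective_linearMap _ _).mp hPK
  have := Module.Flat.subsingleton_tensorProduct_ker_mk (A := A) (B := B) M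
  have := (Module.Flat.lTensor_preserves_injective_linearMap (M := B) f hf).subsingleton
  have := nontrivial_tensorProduct_quotient_comap (A := A) hq.ne_top
  exact false_of_nontrivial_of_subsingleton (B ⊗[A] (A ⧸ q.comap (algebraMap A B)))

theorem Ideal.comap_map_eq_self_of_flat_of_associatedPrimes [Module.Flat A B]
    [IsNoetherianRing A] (I : Ideal A)
    (h : ∀ p ∈ associatedPrimes A (A ⧸ I),
      ∃ q : Ideal B, q.IsPrime ∧ q.comap (algebraMap A B) = p) :
    (I.map (algebraMap A B)).comap (algebraMap A B) = I := by
  refine le_antisymm (fun a ha ↦ ?_) le_comap_map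
  rw [← Ideal.Quotient.eq_zero_iff_mem]
  apply Module.Flat.tensorProduct_mk_injective_of_associatedPrimes (B := B) _ h
  have hmk : (1 : B) ⊗ₜ[A] Ideal.Quotient.mk I a = Algebra.TensorProduct.quotIdealMapEquivTensorQuot
      B I (Ideal.Quotient.mk _ (algebraMap A B a)) := by
    rw [Algebra.TensorProduct.quotIdealMapEquivTensorQuot_mk, Algebra.algebraMap_eq_smul_one,
      smul_tmul, Algebra.smul_def, mul_one, Ideal.Quotient.algebraMap_eq]
  rw [map_zero, TensorProduct.mk_apply, hmk, Ideal.Quotient.eq_zero_iff_mem.mpr (mem_comap.mp ha),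
    map_zero]

end

theorem scheme_theoretic_image_of_etale_preimage_general
    (A B : Type*) [CommRing A] [CommRing B] [IsNoetherianRing A]
    [Algebra A B] [Module.Flat A B]
    (I : Ideal A)
    (hI : ∀ p ∈ associatedPrimes A (A ⧸ I), p ∈ I.minimalPrimes)
    (hdom : ∀ p ∈ I.minimalPrimes, ∃ q : Ideal B, q.IsPrime ∧
      I.map (algebraMap A B) ≤ q ∧ q.comap (algebraMap A B) = p) :
    RingHom.ker ((Ideal.Quotient.mk (I.map (algebraMap A B))).comp (algebraMap A B)) = I := by
  rw [← RingHom.comap_ker, Ideal.mk_ker]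
  refine Ideal.comap_map_eq_self_of_flat_of_associatedPrimes I fun p hp ↦ ?_
  obtain ⟨q, hq, -, hqp⟩ := hdom p (hI p hp)
  exact ⟨q, hq, hqp⟩

theorem scheme_theoretic_image_of_etale_preimage
    (A B : Type*) [CommRing A] [CommRing B] [IsNoetherianRing A] [IsNoetherianRing B]
    [Algebra A B] [Module.Flat A B] [Algebra.FormallyUnramified A B]
    [Algebra.FinitePresentation A B]
    (I : Ideal A)
    (hI : ∀ p ∈ associatedPrimes A (A ⧸ I), p ∈ I.minimalPrimes)
    (hdom : ∀ p ∈ I.minimalPrimes, ∃ q : Ideal B, q.IsPrime ∧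
      I.map (algebraMap A B) ≤ q ∧ q.comap (algebraMap A B) = p) :
    RingHom.ker ((Ideal.Quotient.mk (I.map (algebraMap A B))).comp (algebraMap A B)) = I :=
  scheme_theoretic_image_of_etale_preimage_general A B I hI hdom
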